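/- Let N ≥ 1, let k ≥ 1 be a natural number, and let v, w : (Fin N ⊕ Fin N) → ℤ be integer vectors. Then there exists a matrix M in the integral symplectic group Sp(2N,ℤ) such that M.mulVec v is entrywise congruent to w modulo k (i.e. k divides (M.mulVec v) i − w i for every index i) if and only if gcd(v_1, …, v_{2N}, k) = gcd(w_1, …, w_{2N}, k). Thus the orbits of the symplectic action on (ℤ/kℤ)^{2N} are classified by the gcd of the entries together with k. -/

import Mathlib

/-!
An `SL₂(ℤ)` matrix acting on each coordinate pair `(xᵢ, yᵢ)` replaces it by
`(gcd(xᵢ, yᵢ), 0)`. A symmetric transvection `y ↦ y + C x` then writes a Bézout combination of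
these gcds, i.e. their common gcd `G`, into `yᵢ`; a second pass of pairwise gcds produces a
vector supported on the `x`-coordinates whose `i`-th entry divides all others, and a block
`diag(A, A⁻ᵀ)` clears the rest. So `Sp(2N, ℤ)` moves every vector to some `D eᵢ`, and modulo `k`
one more `SL₂(ℤ)` matrix moves `D eᵢ` to `gcd(D, k) eᵢ`, because `D / gcd(D, k)` and
`k / gcd(D, k)` are coprime. Conversely `gcd(v, k)` is invariant, since the entries of `M v` are
integer combinations of those of `v` and `M⁻¹` is again integral.
-/

open Matrix

theorem Int.exists_sl2_map_eq_gcd_zero (x y : ℤ) :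
    ∃ a b c d : ℤ, a * d - b * c = 1 ∧ a * x + b * y = x.gcd y ∧ c * x + d * y = 0 := by
  rcases (x.gcd y).eq_zero_or_pos with h | h
  · obtain ⟨rfl, rfl⟩ := Int.gcd_eq_zero_iff.1 h
    exact ⟨1, 0, 0, 1, by simp⟩
  · obtain ⟨x', y', hxy, hx, hy⟩ := Int.exists_gcd_one h
    obtain ⟨u, w, huw⟩ := Int.isCoprime_iff_gcd_eq_one.2 hxy
    refine ⟨u, w, -y', x', by linear_combination huw, ?_, ?_⟩
    · linear_combination u * hx + w * hy + (x.gcd y : ℤ) * huw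
    · linear_combination -y' * hx + x' * hy

theorem Int.exists_sl2_map_eq_gcd_zero_mod {k : ℤ} (hk : k ≠ 0) (x : ℤ) :
    ∃ a b c d : ℤ, a * d - b * c = 1 ∧ k ∣ a * x - x.gcd k ∧ k ∣ c * x := by
  obtain ⟨u, w, huw⟩ := isCoprime_div_gcd_div_gcd (p := x) hk
  have hx := Int.ediv_mul_cancel (GCDMonoid.gcd_dvd_left x k)
  have hk' := Int.ediv_mul_cancel (GCDMonoid.gcd_dvd_right x k)
  rw [← Int.coe_gcd] at hx hk' huw
  refine ⟨u, -w, k / x.gcd k, x / x.gcd k, by linear_combination huw, ⟨-w, ?_⟩,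
    ⟨x / x.gcd k, ?_⟩⟩
  · linear_combination (x.gcd k : ℤ) * huw - u * hx - w * hk'
  · linear_combination (x / x.gcd k) * hk' - (k / x.gcd k) * hx

theorem Matrix.fromBlocks_diagonal_mulVec_sumElim {R n : Type*} [NonUnitalNonAssocSemiring R]
    [Fintype n] [DecidableEq n] (a b c d x y : n → R) :
    fromBlocks (diagonal a) (diagonal b) (diagonal c) (diagonal d) *ᵥ Sum.elim x y =
      Sum.elim (a * x + b * y) (c * x + d * y) := by
  rw [fromBlocks_mulVec]
  congr 1 <;> funext i <;> simp [mulVec_diagonal]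

theorem Matrix.dvd_mulVec_of_forall_dvd {R l m : Type*} [CommSemiring R] [Fintype m] {k : R}
    (M : Matrix l m R) {u : m → R} (h : ∀ j, k ∣ u j) (i : l) : k ∣ (M *ᵥ u) i :=
  Finset.dvd_sum fun j _ ↦ (h j).mul_left _

namespace SymplecticGroup

variable {R n : Type*} [CommRing R] [Fintype n] [DecidableEq n]

theorem fromBlocks_diagonal_mem {a b c d : n → R} (h : ∀ i, a i * d i - b i * c i = 1) :
    fromBlocks (diagonal a) (diagonal b) (diagonal c) (diagonal d) ∈ symplecticGroup n R := by
  refine fromBlocks_mem_iff.2 ⟨?_, ?_, ?_⟩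
  · simp [diagonal_mul_diagonal, mul_comm]
  · simp [diagonal_mul_diagonal, mul_comm]
  · rw [diagonal_transpose, diagonal_mul_diagonal, diagonal_transpose, diagonal_mul_diagonal,
      diagonal_sub, ← diagonal_one]
    congr 1
    funext i
    linear_combination h i

theorem fromBlocks_one_zero_mem {C : Matrix n n R} (hC : C.IsSymm) :
    fromBlocks 1 0 C 1 ∈ symplecticGroup n R :=
  fromBlocks_mem_iff.2 ⟨by simpa using hC.symm, by simp, by simp⟩

theorem fromBlocks_zero_zero_mem {A D : Matrix n n R} (h : Aᵀ * D = 1) :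
    fromBlocks A 0 0 D ∈ symplecticGroup n R :=
  fromBlocks_mem_iff.2 ⟨by simp, by simp, by simpa using h⟩

theorem exists_mulVec_eq_pairwise_gcd (x y : n → ℤ) :
    ∃ M ∈ symplecticGroup n ℤ,
      M *ᵥ Sum.elim x y = Sum.elim (fun i ↦ ((x i).gcd (y i) : ℤ)) 0 := by
  choose a b c d hdet hx hy using fun i ↦ Int.exists_sl2_map_eq_gcd_zero (x i) (y i)
  refine ⟨_, fromBlocks_diagonal_mem hdet, ?_⟩
  rw [fromBlocks_diagonal_mulVec_sumElim]
  congr 1 <;> funext i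
  exacts [hx i, hy i]

theorem exists_mulVec_eq_gcd_at (g : n → ℤ) (i : n) :
    ∃ M ∈ symplecticGroup n ℤ, ∃ y : n → ℤ, M *ᵥ Sum.elim g 0 = Sum.elim g y ∧
      y i = Finset.univ.gcd g ∧ ∀ j, Finset.univ.gcd g ∣ y j := by
  obtain ⟨c, hc⟩ := Finset.gcd_eq_sum_mul Finset.univ g
  set C : Matrix n n ℤ := of fun j l ↦ if j = i then c l else if l = i then c j else 0
  have hC : C.IsSymm := by
    ext j l
    by_cases hj : j = i <;> by_cases hl : l = i <;> simp [C, hj, hl]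
  have hCi : (C *ᵥ g) i = Finset.univ.gcd g := by
    simp [C, mulVec, dotProduct, hc, mul_comm]
  have hCj : ∀ j, j ≠ i → (C *ᵥ g) j = c j * g i := by
    intro j hj
    simp [C, mulVec, dotProduct, hj]
  refine ⟨_, fromBlocks_one_zero_mem hC, C *ᵥ g, ?_, hCi, fun j ↦ ?_⟩
  · simp [fromBlocks_mulVec]
  · rcases eq_or_ne j i with rfl | hj
    · rw [hCi]
    · rw [hCj j hj]
      exact (Finset.gcd_dvd (Finset.mem_univ i)).mul_left _

theorem exists_mulVec_eq_single_of_dvd (t : n → ℤ) (i : n) (ht : ∀ j, t i ∣ t j) :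
    ∃ M ∈ symplecticGroup n ℤ, M *ᵥ Sum.elim t 0 = Sum.elim (Pi.single i (t i)) 0 := by
  set u : n → ℤ := Function.update (fun j ↦ t j / t i) i 0
  set P : Matrix n n ℤ := vecMulVec u (Pi.single i 1)
  have hPP : P * P = 0 := by simp [P, vecMulVec_mul_vecMulVec, u]
  refine ⟨fromBlocks (1 - P) 0 0 (1 + Pᵀ), fromBlocks_zero_zero_mem ?_, ?_⟩
  · have : (1 - P)ᵀ * (1 + Pᵀ) = 1 - (P * P)ᵀ := by
      rw [transpose_sub, transpose_one, transpose_mul]; noncomm_ring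
    rw [this, hPP, transpose_zero, sub_zero]
  · have hPt : P *ᵥ t = fun j ↦ u j * t i := by
      ext j; simp [P, vecMulVec_mulVec, mul_comm]
    simp only [fromBlocks_mulVec, Sum.elim_comp_inl, Sum.elim_comp_inr, sub_mulVec, one_mulVec,
      hPt]
    congr 1
    · funext j
      rcases eq_or_ne j i with rfl | hj
      · simp [u]
      · simp [u, hj, Int.ediv_mul_cancel (ht j)]
    · simp

theorem exists_mulVec_eq_single (i : n) (v : n ⊕ n → ℤ) :
    ∃ D : ℤ, ∃ M ∈ symplecticGroup n ℤ, M *ᵥ v = Sum.elim (Pi.single i D) 0 := by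
  obtain ⟨M₁, hM₁, h₁⟩ := exists_mulVec_eq_pairwise_gcd (v ∘ Sum.inl) (v ∘ Sum.inr)
  set g : n → ℤ := fun j ↦ ((v (Sum.inl j)).gcd (v (Sum.inr j)) : ℤ)
  obtain ⟨M₂, hM₂, y, h₂, hyi, hy⟩ := exists_mulVec_eq_gcd_at g i
  obtain ⟨M₃, hM₃, h₃⟩ := exists_mulVec_eq_pairwise_gcd g y
  set t : n → ℤ := fun j ↦ ((g j).gcd (y j) : ℤ)
  -- `t i = gcd (g i) G` divides `G = gcd g`, which divides both `g j` and `y j`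
  have ht : ∀ j, t i ∣ t j := fun j ↦ by
    refine (Int.gcd_dvd_right (g i) (y i)).trans ?_
    rw [hyi]
    exact Int.dvd_coe_gcd (Finset.gcd_dvd (Finset.mem_univ j)) (hy j)
  obtain ⟨M₄, hM₄, h₄⟩ := exists_mulVec_eq_single_of_dvd t i ht
  refine ⟨t i, M₄ * M₃ * M₂ * M₁, mul_mem (mul_mem (mul_mem hM₄ hM₃) hM₂) hM₁, ?_⟩
  rw [← mulVec_mulVec, ← mulVec_mulVec, ← mulVec_mulVec, ← Sum.elim_comp_inl_inr v, h₁]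
  change M₄ *ᵥ M₃ *ᵥ M₂ *ᵥ Sum.elim g 0 = _
  rw [h₂, h₃, h₄]

end SymplecticGroup

section Congruence

open SymplecticGroup

variable {n : Type*} [Fintype n] [DecidableEq n]

def SymplecticCongr (k : ℤ) (v w : n ⊕ n → ℤ) : Prop :=
  ∃ M ∈ symplecticGroup n ℤ, ∀ i, k ∣ (M *ᵥ v) i - w i

namespace SymplecticCongr

variable {k : ℤ} {u v w : n ⊕ n → ℤ}

theorem of_mulVec_eq {M : Matrix (n ⊕ n) (n ⊕ n) ℤ} (hM : M ∈ symplecticGroup n ℤ)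
    (h : M *ᵥ v = w) : SymplecticCongr k v w :=
  ⟨M, hM, fun i ↦ by simp [h]⟩

theorem trans (h₁ : SymplecticCongr k u v) (h₂ : SymplecticCongr k v w) :
    SymplecticCongr k u w := by
  obtain ⟨M₁, hM₁, h₁⟩ := h₁
  obtain ⟨M₂, hM₂, h₂⟩ := h₂
  refine ⟨M₂ * M₁, mul_mem hM₂ hM₁, fun i ↦ ?_⟩
  have : ((M₂ * M₁) *ᵥ u) i - w i = (M₂ *ᵥ (M₁ *ᵥ u - v)) i + ((M₂ *ᵥ v) i - w i) := by
    simp [← mulVec_mulVec, mulVec_sub]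
  rw [this]
  exact dvd_add (M₂.dvd_mulVec_of_forall_dvd h₁ i) (h₂ i)

theorem symm (h : SymplecticCongr k v w) : SymplecticCongr k w v := by
  obtain ⟨M, hM, h⟩ := h
  have hM' : M⁻¹ ∈ symplecticGroup n ℤ :=
    coe_inv' ⟨M, hM⟩ ▸ (⟨M, hM⟩⁻¹ : symplecticGroup n ℤ).2
  refine ⟨M⁻¹, hM', fun i ↦ ?_⟩
  have : (M⁻¹ *ᵥ w) i - v i = -(M⁻¹ *ᵥ (M *ᵥ v - w)) i := by
    simp [mulVec_sub, mulVec_mulVec, nonsing_inv_mul M (symplectic_det hM)]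
  rw [this, dvd_neg]
  exact Matrix.dvd_mulVec_of_forall_dvd _ h i

theorem gcd_dvd (h : SymplecticCongr k v w) :
    (Finset.univ.gcd v).gcd k ∣ (Finset.univ.gcd w).gcd k := by
  obtain ⟨M, -, h⟩ := h
  set d := (Finset.univ.gcd v).gcd k
  have hdk : (d : ℤ) ∣ k := Int.gcd_dvd_right _ _
  have hdv : ∀ j, (d : ℤ) ∣ v j := fun j ↦
    (Int.gcd_dvd_left _ _).trans (Finset.gcd_dvd (Finset.mem_univ j))
  have hdw : ∀ j, (d : ℤ) ∣ w j := fun j ↦ by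
    simpa using dvd_sub (M.dvd_mulVec_of_forall_dvd hdv j) (hdk.trans (h j))
  exact Int.natCast_dvd_natCast.1 (Int.dvd_coe_gcd (Finset.dvd_gcd fun j _ ↦ hdw j) hdk)

theorem gcd_eq (h : SymplecticCongr k v w) :
    (Finset.univ.gcd v).gcd k = (Finset.univ.gcd w).gcd k :=
  Nat.dvd_antisymm h.gcd_dvd h.symm.gcd_dvd

theorem single_gcd (hk : k ≠ 0) (i : n) (D : ℤ) :
    SymplecticCongr k (Sum.elim (Pi.single i D) 0)
      (Sum.elim (Pi.single i (D.gcd k : ℤ)) 0) := by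
  obtain ⟨a, b, c, d, hdet, ha, hc⟩ := Int.exists_sl2_map_eq_gcd_zero_mod hk D
  refine ⟨_, fromBlocks_diagonal_mem (a := fun _ ↦ a) (b := fun _ ↦ b) (c := fun _ ↦ c)
    (d := fun _ ↦ d) fun _ ↦ hdet, ?_⟩
  rw [fromBlocks_diagonal_mulVec_sumElim]
  rintro (j | j) <;> rcases eq_or_ne j i with rfl | hj <;> simp [*]

end SymplecticCongr

theorem finsetGcd_sumElim_single_gcd (i : n) (D k : ℤ) :
    (Finset.univ.gcd (Sum.elim (Pi.single i D) 0 : n ⊕ n → ℤ)).gcd k = D.gcd k := by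
  set f : n ⊕ n → ℤ := Sum.elim (Pi.single i D) 0
  have hD : D ∣ Finset.univ.gcd f := by
    refine Finset.dvd_gcd fun j _ ↦ ?_
    rcases j with j | j
    · rcases eq_or_ne j i with rfl | hj <;> simp [f, *]
    · simp [f]
  have hG : Finset.univ.gcd f ∣ D := by
    simpa [f] using Finset.gcd_dvd (f := f) (Finset.mem_univ (Sum.inl i))
  exact Nat.dvd_antisymm (Int.gcd_dvd_gcd_of_dvd_left _ hG) (Int.gcd_dvd_gcd_of_dvd_left _ hD)

theorem symplecticCongr_single_gcd {k : ℤ} (hk : k ≠ 0) (i : n) (v : n ⊕ n → ℤ) :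
    SymplecticCongr k v (Sum.elim (Pi.single i ((Finset.univ.gcd v).gcd k : ℤ)) 0) := by
  obtain ⟨D, M, hM, hMv⟩ := exists_mulVec_eq_single i v
  have h := (SymplecticCongr.of_mulVec_eq hM hMv).trans (SymplecticCongr.single_gcd hk i D)
  have hgcd : (Finset.univ.gcd v).gcd k = D.gcd k := by
    rw [h.gcd_eq, finsetGcd_sumElim_single_gcd]
    exact_mod_cast Int.gcd_eq_left (Int.natCast_nonneg _) (Int.gcd_dvd_right D k)
  rwa [hgcd]

end Congruence

/-- Two vectors of `(ℤ/kℤ)^{2N}` lie in the same orbit of the symplectic group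
`Sp(2N,ℤ)` iff `gcd(v₁,…,v_{2N},k) = gcd(w₁,…,w_{2N},k)`, where the action on
integer vectors is by matrix-vector multiplication followed by reduction mod `k`. -/
theorem symplectic_orbit_mod_k_iff_gcd {N : ℕ} (hN : 1 ≤ N)
    (k : ℕ) (hk : 1 ≤ k) (v w : (Fin N ⊕ Fin N) → ℤ) :
    (∃ M ∈ Matrix.symplecticGroup (Fin N) ℤ,
        ∀ i : Fin N ⊕ Fin N, (k : ℤ) ∣ (M.mulVec v i - w i)) ↔
      Int.gcd (Finset.univ.gcd v) (k : ℤ) = Int.gcd (Finset.univ.gcd w) (k : ℤ) := by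
  have hk₀ : (k : ℤ) ≠ 0 := by omega
  refine ⟨SymplecticCongr.gcd_eq, fun h ↦ ?_⟩
  have hv := symplecticCongr_single_gcd hk₀ ⟨0, hN⟩ v
  have hw := symplecticCongr_single_gcd hk₀ ⟨0, hN⟩ w
  rw [h] at hv
  exact hv.trans hw.symm
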